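/- arXiv:1601.04200 — 2 statements merged into one kernel-verified Lean document; each statement's English description precedes it below -/
import Mathlib

section
/- Let Ω ⊂ ℝ² be a bounded convex open set with Lipschitz boundary, S : L²(Ω) → L²(Ω) a bounded linear operator (the time-T solution operator of the time-space fractional diffusion equation), λ > 0, δ > 0, and g^δ ∈ L²(Ω). Consider the modified Bregman iteration: u⁰ = p⁰ = 0, u^{m+1} ∈ argmin_u { F_m(u) − F_m(u^m) − ⟨p^m, u − u^m⟩ + (λ/2)‖Su − g^δ‖²_{L²} } and p^{m+1} := p^m − λ S^*(S u^{m+1} − g^δ), where F_m(u) := ∫_Ω |∇u|^{p̃^m(x)} dx with p̃^m(x) := P_M(|∇(G_δ̃ * u^m)(x)|²) ∈ [1,2], and assume p^m ∈ ∂F_m(u^m) for every m ≥ 0. Then: (i) the data fitting error is non-increasing, i.e. ‖S u^{m+1} − g^δ‖_{L²} ≤ ‖S u^m − g^δ‖_{L²} for all m ≥ 1; and (ii) if in addition F_{m−1}(u^m) ≤ F_m(u^m) for m = 1,…,M and u_* satisfies ‖S u_* − g^δ‖_{L²} ≤ δ, then ‖S u^M − g^δ‖²_{L²} ≤ (2/(λ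 M)) F_M(u_*) + δ². -/
open MeasureTheory Filter Topology
open scoped ENNReal NNReal RealInnerProductSpace

noncomputable section

/-- Euclidean space `ℝ^d`. -/
abbrev Ed (d : ℕ) := EuclideanSpace ℝ (Fin d)

/-- Mollification `G ⋆ u` of `u` by the kernel `G`. -/
def mollify (G : Ed 2 → ℝ) (u : Ed 2 → ℝ) (x : Ed 2) : ℝ :=
  ∫ y, G (x - y) * u y

/-- The variable exponent `p̃(x) = P_M(|∇(G_δ̃ ⋆ u)(x)|²)`. -/
def ptilde (PM : ℝ → ℝ) (G : Ed 2 → ℝ) (u : Ed 2 → ℝ) (x : Ed 2) : ℝ :=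
  PM (‖gradient (mollify G u) x‖ ^ 2)

/-- The iteration-dependent regularizer `F_m(w) = ∫_Ω |∇w|^{p̃^m(x)} dx`, where
`p̃^m(x) = P_M(|∇(G_δ̃ ⋆ u^m)(x)|²)` is built from the current iterate `u^m`. -/
def Fm (PM : ℝ → ℝ) (G : Ed 2 → ℝ) (Ω : Set (Ed 2)) (um : Ed 2 → ℝ) (w : Ed 2 → ℝ) : ℝ :=
  ∫ x in Ω, ‖gradient w x‖ ^ ptilde PM G um x

set_option maxHeartbeats 4000000 in
/-- For the modified Bregman iteration with iteration-dependent
variable-TV regularizers `F_m`: (i) the data fitting error is non-increasing, and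
(ii) under `F_{m-1}(u^m) ≤ F_m(u^m)`, `‖Su^M - g^δ‖² ≤ (2/(λM)) F_M(u_*) + δ²`
for any `u_*` with `‖Su_* - g^δ‖ ≤ δ`. -/
theorem statement11 (Ω : Set (Ed 2)) (hΩo : IsOpen Ω) (hΩconv : Convex ℝ Ω)
    (hΩb : Bornology.IsBounded Ω)
    -- mollifier and exponent-profile data
    (G : Ed 2 → ℝ) (hGsmooth : ContDiff ℝ 2 G) (hGsymm : ∀ x, G (-x) = G x)
    (hGpos : ∀ x, 0 ≤ G x) (hGint : (∫ x, G x) = 1)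
    (M₀ : ℝ) (hM₀ : 0 < M₀) (PM : ℝ → ℝ) (hPMmono : AntitoneOn PM (Set.Ici 0))
    (hPMsmooth : ContDiffOn ℝ 2 PM (Set.Ici 0))
    (hPMrange : ∀ s : ℝ, 0 ≤ s → PM s ∈ Set.Icc (1:ℝ) 2) (hPMM : PM M₀ = 1)
    -- data of the problem
    (S : Lp ℝ 2 (volume.restrict Ω) →L[ℝ] Lp ℝ 2 (volume.restrict Ω))
    (lam δ : ℝ) (hlam : 0 < lam) (hδ : 0 < δ)
    (gδ : Lp ℝ 2 (volume.restrict Ω))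
    -- the Bregman iterates
    (u p : ℕ → Lp ℝ 2 (volume.restrict Ω))
    (hu0 : u 0 = 0) (hp0 : p 0 = 0)
    -- `F m` is the regularizer at step `m`
    (F : ℕ → Lp ℝ 2 (volume.restrict Ω) → ℝ)
    (hF : ∀ m w, F m w = Fm PM G Ω (↑(u m) : Ed 2 → ℝ) (↑w : Ed 2 → ℝ))
    -- `p^m ∈ ∂F_m(u^m)`
    (hsub : ∀ m, ∀ w : Lp ℝ 2 (volume.restrict Ω),
      ⟪p m, w - u m⟫ ≤ F m w - F m (u m))
    -- `u^{m+1}` minimizes the Bregman-distance objective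
    (hmin : ∀ m, ∀ w : Lp ℝ 2 (volume.restrict Ω),
      F m (u (m+1)) - F m (u m) - ⟪p m, u (m+1) - u m⟫
          + lam / 2 * ‖S (u (m+1)) - gδ‖ ^ 2
        ≤ F m w - F m (u m) - ⟪p m, w - u m⟫ + lam / 2 * ‖S w - gδ‖ ^ 2)
    -- dual update `p^{m+1} = p^m - λ S^*(S u^{m+1} - g^δ)`
    (hp : ∀ m, p (m+1) = p m - lam • (ContinuousLinearMap.adjoint S) (S (u (m+1)) - gδ)) :
    -- (i) monotone decay of the data fitting error
    (∀ m : ℕ, 1 ≤ m → ‖S (u (m+1)) - gδ‖ ≤ ‖S (u m) - gδ‖) ∧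
    -- (ii) quantitative decay
    (∀ Mit : ℕ, 1 ≤ Mit →
      (∀ m : ℕ, 1 ≤ m → m ≤ Mit → F (m-1) (u m) ≤ F m (u m)) →
      ∀ ustar : Lp ℝ 2 (volume.restrict Ω), ‖S ustar - gδ‖ ≤ δ →
        ‖S (u Mit) - gδ‖ ^ 2 ≤ 2 / (lam * Mit) * F Mit ustar + δ ^ 2) := by
  have hl2 : (0:ℝ) < lam / 2 := by linarith
  -- Part (i), for all m
  have mono : ∀ m : ℕ, ‖S (u (m+1)) - gδ‖ ≤ ‖S (u m) - gδ‖ := by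
    intro m
    have h1 := hmin m (u m)
    have h2 := hsub m (u (m+1))
    simp only [sub_self, inner_zero_right] at h1
    have hsq : ‖S (u (m+1)) - gδ‖ ^ 2 ≤ ‖S (u m) - gδ‖ ^ 2 := by
      have hmul : lam / 2 * ‖S (u (m+1)) - gδ‖ ^ 2 ≤ lam / 2 * ‖S (u m) - gδ‖ ^ 2 := by
        linarith
      exact (mul_le_mul_iff_right₀ hl2).mp hmul
    have hs := Real.sqrt_le_sqrt hsq
    rwa [Real.sqrt_sq (norm_nonneg _), Real.sqrt_sq (norm_nonneg _)] at hs
  have hanti : Antitone fun m => ‖S (u m) - gδ‖ := antitone_nat_of_succ_le mono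
  refine ⟨fun m _ => mono m, ?_⟩
  intro Mit hMit hmono ustar hustar
  set s : Lp ℝ 2 (volume.restrict Ω) := S ustar - gδ with hs_def
  obtain ⟨E, hE⟩ : ∃ E : ℕ → ℝ, ∀ m, E m = -F m (u m) - ⟪p m, ustar - u m⟫ :=
    ⟨fun m => -F m (u m) - ⟪p m, ustar - u m⟫, fun m => rfl⟩
  -- key one-step estimate
  have key : ∀ m : ℕ, m + 1 ≤ Mit →
      lam / 2 * ‖S (u (m+1)) - gδ‖ ^ 2 ≤ E m - E (m+1) + lam / 2 * δ ^ 2 := by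
    intro m hm
    set r : Lp ℝ 2 (volume.restrict Ω) := S (u (m+1)) - gδ with hr_def
    have hpinner : ⟪p (m+1), ustar - u (m+1)⟫
        = ⟪p m, ustar - u (m+1)⟫ - lam * (⟪r, s⟫ - ‖r‖ ^ 2) := by
      rw [hp m, inner_sub_left, real_inner_smul_left,
        ContinuousLinearMap.adjoint_inner_left, map_sub]
      have hws : S ustar - S (u (m+1)) = s - r := by
        rw [hs_def, hr_def]; abel
      rw [hws, ← hr_def, inner_sub_right r s r, real_inner_self_eq_norm_sq]
    have hsplit : ⟪p m, ustar - u m⟫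
        = ⟪p m, ustar - u (m+1)⟫ + ⟪p m, u (m+1) - u m⟫ := by
      simp only [inner_sub_right]; ring
    have hDtil : (0:ℝ) ≤ F m (u (m+1)) - F m (u m) - ⟪p m, u (m+1) - u m⟫ := by
      have := hsub m (u (m+1)); linarith
    have hΔ : F m (u (m+1)) ≤ F (m+1) (u (m+1)) := by
      have := hmono (m+1) (by omega) hm
      simpa using this
    have hrs : ⟪r, s⟫ ≤ ‖r‖ * δ := by
      calc ⟪r, s⟫ ≤ ‖r‖ * ‖s‖ := real_inner_le_norm r s
        _ ≤ ‖r‖ * δ := mul_le_mul_of_nonneg_left hustar (norm_nonneg r)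
    have hbound : lam * (⟪r, s⟫ - ‖r‖ ^ 2) ≤ lam / 2 * δ ^ 2 - lam / 2 * ‖r‖ ^ 2 := by
      nlinarith [mul_le_mul_of_nonneg_left hrs hlam.le,
        mul_nonneg hlam.le (sq_nonneg (‖r‖ - δ))]
    rw [hE m, hE (m+1), hpinner]
    linarith
  -- summation
  have hsum : ∀ n : ℕ, n ≤ Mit →
      (n:ℝ) * (lam / 2 * ‖S (u Mit) - gδ‖ ^ 2) ≤ E 0 - E n + (n:ℝ) * (lam / 2 * δ ^ 2) := by
    intro n hn
    induction n with
    | zero => simp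
    | succ k ih =>
      have hk : k ≤ Mit := by omega
      have ihk := ih hk
      have hkey := key k hn
      have haM : ‖S (u Mit) - gδ‖ ≤ ‖S (u (k+1)) - gδ‖ := hanti hn
      have hsq : ‖S (u Mit) - gδ‖ ^ 2 ≤ ‖S (u (k+1)) - gδ‖ ^ 2 :=
        pow_le_pow_left₀ (norm_nonneg _) haM 2
      have hsq' : lam / 2 * ‖S (u Mit) - gδ‖ ^ 2 ≤ lam / 2 * ‖S (u (k+1)) - gδ‖ ^ 2 :=
        mul_le_mul_of_nonneg_left hsq hl2.le
      push_cast
      linarith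
  have hF0 : (0:ℝ) ≤ F 0 (u 0) := by
    rw [hF 0 (u 0)]
    exact integral_nonneg fun x => Real.rpow_nonneg (norm_nonneg _) _
  have hE0 : E 0 ≤ 0 := by
    rw [hE 0, hp0, inner_zero_left]
    linarith
  have hEM : -F Mit ustar ≤ E Mit := by
    have hsubM := hsub Mit ustar
    rw [hE Mit]; linarith
  have hfin := hsum Mit le_rfl
  have hMpos : (0:ℝ) < (Mit:ℝ) := by exact_mod_cast hMit
  have hlm : (0:ℝ) < lam * Mit := mul_pos hlam hMpos
  have hfin' : (Mit:ℝ) * (lam / 2 * ‖S (u Mit) - gδ‖ ^ 2) ≤ F Mit ustar + (Mit:ℝ) * (lam / 2 * δ ^ 2) := by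
    linarith
  have h2 : (‖S (u Mit) - gδ‖ ^ 2 - δ ^ 2) * (lam * Mit) ≤ 2 * F Mit ustar := by
    nlinarith [hfin, hE0, hEM, hfin']
  have h3 : ‖S (u Mit) - gδ‖ ^ 2 - δ ^ 2 ≤ 2 * F Mit ustar / (lam * Mit) :=
    (le_div_iff₀ hlm).mpr h2
  rw [show 2 / (lam * (Mit:ℝ)) * F Mit ustar = 2 * F Mit ustar / (lam * Mit) by ring]
  linarith
end
end

section
/- In the setting of the modified Bregman iteration (u⁰ = p⁰ = 0; u^{m+1} ∈ argmin_u { F_m(u) − F_m(u^m) − ⟨p^m, u − u^m⟩ + (λ/2)‖Su − g^δ‖²_{L²} }; p^{m+1} = p^m − λ S^*(S u^{m+1} − g^δ); p^m ∈ ∂F_m(u^m) and F_{m−1}(u^m) ≤ F_m(u^m) for all m), let u be the exact initial distribution satisfying ‖Su − g^δ‖_{L²} ≤ δ, and suppose the regularizing parameters (λ, M) are chosen so that (2/(λ M)) F_M(u) = δ². Then the reconstruction error satisfies ‖S(u^M − u)‖_{L²} ≤ (√2 + 1) δ. -/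
open MeasureTheory Filter Topology
open scoped ENNReal NNReal RealInnerProductSpace

noncomputable section

set_option maxHeartbeats 1000000 in
theorem bregman_aux {E : Type*} [NormedAddCommGroup E] [InnerProductSpace ℝ E]
    [CompleteSpace E]
    (S : E →L[ℝ] E) (lam δ : ℝ) (hlam : 0 < lam) (hδ : 0 < δ) (gδ : E)
    (u p : ℕ → E) (hp0 : p 0 = 0)
    (F : ℕ → E → ℝ) (hF00 : 0 ≤ F 0 (u 0))
    (hsub : ∀ m, ∀ w : E, ⟪p m, w - u m⟫ ≤ F m w - F m (u m))
    (hmin : ∀ m, ∀ w : E,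
      F m (u (m+1)) - F m (u m) - ⟪p m, u (m+1) - u m⟫
          + lam / 2 * ‖S (u (m+1)) - gδ‖ ^ 2
        ≤ F m w - F m (u m) - ⟪p m, w - u m⟫ + lam / 2 * ‖S w - gδ‖ ^ 2)
    (hp : ∀ m, p (m+1) = p m - lam • (ContinuousLinearMap.adjoint S) (S (u (m+1)) - gδ))
    (hFmono : ∀ m : ℕ, 1 ≤ m → F (m-1) (u m) ≤ F m (u m))
    (uex : E) (hex : ‖S uex - gδ‖ ≤ δ)
    (Mit : ℕ) (hMit : 1 ≤ Mit)
    (hchoice : 2 / (lam * Mit) * F Mit uex = δ ^ 2) :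
    ‖S (u Mit - uex)‖ ≤ (Real.sqrt 2 + 1) * δ := by
  set D : ℕ → ℝ := fun m => F m uex - F m (u m) - ⟪p m, uex - u m⟫ with hD
  set a : ℕ → ℝ := fun m => ‖S (u m) - gδ‖ ^ 2 with ha
  -- the per-step estimate
  have key : ∀ m, D (m+1) + lam/2 * a (m+1)
      ≤ D m + lam/2 * δ^2 + (F (m+1) uex - F m uex) := by
    intro m
    set r : E := S (u (m+1)) - gδ with hr
    set e : E := S uex - gδ with he
    have h1 : ⟪p m, u (m+1) - u m⟫ ≤ F m (u (m+1)) - F m (u m) := hsub m (u (m+1))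
    have h2 : F m (u (m+1)) ≤ F (m+1) (u (m+1)) := by
      have := hFmono (m+1) (Nat.le_add_left 1 m)
      simpa using this
    have hSv : S (uex - u (m+1)) = e - r := by
      rw [map_sub, hr, he]; abel
    have h3 : ⟪p (m+1), uex - u (m+1)⟫
        = ⟪p m, uex - u (m+1)⟫ - lam * (⟪r, e⟫ - ‖r‖^2) := by
      rw [hp m]
      have h3' : ⟪r, e - r⟫ = ⟪r, e⟫ - ‖r‖^2 := by
        rw [inner_sub_right, real_inner_self_eq_norm_sq]
      rw [inner_sub_left, real_inner_smul_left, ContinuousLinearMap.adjoint_inner_left,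
        hSv, h3']
    have hq : ⟪p m, uex - u (m+1)⟫ = ⟪p m, uex - u m⟫ - ⟪p m, u (m+1) - u m⟫ := by
      rw [inner_sub_right, inner_sub_right, inner_sub_right]; ring
    have hcs : ⟪r, e⟫ ≤ ‖r‖ * ‖e‖ := real_inner_le_norm r e
    have hne : ‖e‖ ≤ δ := hex
    have h4 : lam * ⟪r, e⟫ ≤ lam/2 * ‖r‖^2 + lam/2 * δ^2 := by
      have h5 : ⟪r, e⟫ ≤ ‖r‖ * δ :=
        hcs.trans (mul_le_mul_of_nonneg_left hne (norm_nonneg r))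
      nlinarith [sq_nonneg (‖r‖ - δ), norm_nonneg r]
    have haa : a (m+1) = ‖r‖^2 := rfl
    simp only [hD]
    rw [h3, hq, haa]
    nlinarith [h1, h2, h4]
  -- telescoping sum
  have hsum : ∀ n : ℕ, D n + lam/2 * (∑ k ∈ Finset.range n, a (k+1))
      ≤ D 0 + n * (lam/2 * δ^2) + (F n uex - F 0 uex) := by
    intro n
    induction n with
    | zero => simp
    | succ n ih =>
      rw [Finset.sum_range_succ]
      have := key n
      push_cast
      linarith
  -- monotone decrease of the residuals
  have hmono : ∀ m, a (m+1) ≤ a m := by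
    intro m
    have h1 := hmin m (u m)
    have h2 := hsub m (u (m+1))
    simp only [sub_self, inner_zero_right] at h1
    simp only [ha]
    nlinarith
  have hanti : Antitone a := antitone_nat_of_succ_le hmono
  -- lower bound on the sum
  have hsumlb : (Mit : ℝ) * a Mit ≤ ∑ k ∈ Finset.range Mit, a (k+1) := by
    have := Finset.card_nsmul_le_sum (Finset.range Mit) (fun k => a (k+1)) (a Mit)
      (fun k hk => hanti (Finset.mem_range.mp hk))
    simpa [nsmul_eq_mul] using this
  -- positivity facts
  have hMitR : (1:ℝ) ≤ (Mit : ℝ) := by exact_mod_cast hMit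
  have hlamM : 0 < lam * (Mit : ℝ) := mul_pos hlam (by linarith)
  have hFval : F Mit uex = lam * Mit * δ^2 / 2 := by
    field_simp at hchoice
    linarith
  have hDM : 0 ≤ D Mit := by
    have := hsub Mit uex
    simp only [hD]; linarith
  have hD0 : D 0 + (F Mit uex - F 0 uex) ≤ F Mit uex := by
    simp only [hD, hp0, inner_zero_left]
    linarith
  have haMdef : a Mit = ‖S (u Mit) - gδ‖ ^ 2 := rfl
  clear_value D a
  -- combine
  have hmain := hsum Mit
  have haM : a Mit ≤ 2 * δ^2 := by
    have h1 : lam/2 * ((Mit:ℝ) * a Mit) ≤ lam/2 * (∑ k ∈ Finset.range Mit, a (k+1)) :=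
      mul_le_mul_of_nonneg_left hsumlb (by linarith)
    have h2 : lam/2 * ((Mit:ℝ) * a Mit) ≤ F Mit uex + Mit * (lam/2 * δ^2) := by linarith
    rw [hFval] at h2
    have h3 : 0 < lam/2 * (Mit:ℝ) := by positivity
    nlinarith
  -- conclude
  have hnorm : ‖S (u Mit) - gδ‖ ≤ Real.sqrt 2 * δ := by
    have h1 : ‖S (u Mit) - gδ‖^2 ≤ (Real.sqrt 2 * δ)^2 := by
      rw [mul_pow, Real.sq_sqrt (by norm_num : (0:ℝ) ≤ 2), ← haMdef]
      exact haM
    have h2 := Real.sqrt_le_sqrt h1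
    rwa [Real.sqrt_sq (norm_nonneg _), Real.sqrt_sq (by positivity)] at h2
  have hsplit : S (u Mit - uex) = (S (u Mit) - gδ) - (S uex - gδ) := by
    rw [map_sub]; abel
  calc ‖S (u Mit - uex)‖ = ‖(S (u Mit) - gδ) - (S uex - gδ)‖ := by rw [hsplit]
    _ ≤ ‖S (u Mit) - gδ‖ + ‖S uex - gδ‖ := norm_sub_le _ _
    _ ≤ Real.sqrt 2 * δ + δ := add_le_add hnorm hex
    _ = (Real.sqrt 2 + 1) * δ := by ring

/-- For the modified Bregman iteration, if the exact initial
distribution `u` satisfies `‖Su - g^δ‖ ≤ δ` and the parameters `(λ, M)` are chosen so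
that `(2/(λM)) F_M(u) = δ²`, then `‖S(u^M - u)‖ ≤ (√2 + 1)δ`. -/

theorem statement12 (Ω : Set (Ed 2)) (hΩo : IsOpen Ω) (hΩconv : Convex ℝ Ω)
    (hΩb : Bornology.IsBounded Ω)
    -- mollifier and exponent-profile data
    (G : Ed 2 → ℝ) (hGsmooth : ContDiff ℝ 2 G) (hGsymm : ∀ x, G (-x) = G x)
    (hGpos : ∀ x, 0 ≤ G x) (hGint : (∫ x, G x) = 1)
    (M₀ : ℝ) (hM₀ : 0 < M₀) (PM : ℝ → ℝ) (hPMmono : AntitoneOn PM (Set.Ici 0))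
    (hPMsmooth : ContDiffOn ℝ 2 PM (Set.Ici 0))
    (hPMrange : ∀ s : ℝ, 0 ≤ s → PM s ∈ Set.Icc (1:ℝ) 2) (hPMM : PM M₀ = 1)
    -- data of the problem
    (S : Lp ℝ 2 (volume.restrict Ω) →L[ℝ] Lp ℝ 2 (volume.restrict Ω))
    (lam δ : ℝ) (hlam : 0 < lam) (hδ : 0 < δ)
    (gδ : Lp ℝ 2 (volume.restrict Ω))
    -- the Bregman iterates
    (u p : ℕ → Lp ℝ 2 (volume.restrict Ω))
    (hu0 : u 0 = 0) (hp0 : p 0 = 0)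
    (F : ℕ → Lp ℝ 2 (volume.restrict Ω) → ℝ)
    (hF : ∀ m w, F m w = Fm PM G Ω (↑(u m) : Ed 2 → ℝ) (↑w : Ed 2 → ℝ))
    (hsub : ∀ m, ∀ w : Lp ℝ 2 (volume.restrict Ω),
      ⟪p m, w - u m⟫ ≤ F m w - F m (u m))
    (hmin : ∀ m, ∀ w : Lp ℝ 2 (volume.restrict Ω),
      F m (u (m+1)) - F m (u m) - ⟪p m, u (m+1) - u m⟫
          + lam / 2 * ‖S (u (m+1)) - gδ‖ ^ 2
        ≤ F m w - F m (u m) - ⟪p m, w - u m⟫ + lam / 2 * ‖S w - gδ‖ ^ 2)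
    (hp : ∀ m, p (m+1) = p m - lam • (ContinuousLinearMap.adjoint S) (S (u (m+1)) - gδ))
    (hFmono : ∀ m : ℕ, 1 ≤ m → F (m-1) (u m) ≤ F m (u m))
    -- the exact initial distribution and the parameter-choice strategy
    (uex : Lp ℝ 2 (volume.restrict Ω)) (hex : ‖S uex - gδ‖ ≤ δ)
    (Mit : ℕ) (hMit : 1 ≤ Mit)
    (hchoice : 2 / (lam * Mit) * F Mit uex = δ ^ 2) :
    ‖S (u Mit - uex)‖ ≤ (Real.sqrt 2 + 1) * δ := by
  have hF00 : 0 ≤ F 0 (u 0) := by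
    rw [hF]
    unfold Fm
    exact integral_nonneg fun x => Real.rpow_nonneg (norm_nonneg _) _
  exact bregman_aux S lam δ hlam hδ gδ u p hp0 F hF00 hsub hmin hp hFmono uex hex
    Mit hMit hchoice
end
end
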